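/- The number of pairs (a₁, a₀) ∈ ℤ² satisfying −X/2 ≤ a₁ < 0, a₀ > 0, 27·a₀² < −4·a₁³, and such that the polynomial T³ + a₁·T + a₀ is irreducible over ℚ, equals (1/(15·√6))·X^{5/2} + o(X^{5/2}) as X → ∞. -/

import Mathlib

/-!
Write `a₁ = -m` with `1 ≤ m ≤ ⌊X/2⌋`. For fixed `m` the admissible `a₀` are the integers in
`(0, √(4m³/27))`, so there are `√(4/27) m^{3/2} + O(1)` of them; comparing the sum over `m` with
`∫₀^{X/2} t^{3/2} dt` gives `√(4/27) (2/5) (X/2)^{5/2} = X^{5/2}/(15√6)` pairs up to `O(X^{3/2})`.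
A reducible monic cubic has an integer root `r`; the discriminant forces `r² < 4m`, and `(m, r)`
determines `a₀ = mr - r³`, so only `O(X^{3/2})` pairs are reducible.
-/

open Filter Polynomial

noncomputable section

/-- The number of pairs `(a₁, a₀) ∈ ℤ²` with `−X/2 ≤ a₁ < 0`, `a₀ > 0`,
`27 a₀² < −4 a₁³` (positive discriminant), whose associated cubic polynomial
`T³ + a₁ T + a₀` is irreducible over `ℚ`. -/
def irredCubicCount (X : ℝ) : ℕ :=
  Nat.card {p : ℤ × ℤ //
    -X / 2 ≤ (p.1 : ℝ) ∧ p.1 < 0 ∧ 0 < p.2 ∧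
    27 * (p.2 : ℝ) ^ 2 < -4 * (p.1 : ℝ) ^ 3 ∧
    Irreducible (Polynomial.X ^ 3 + C (p.1 : ℚ) * Polynomial.X + C (p.2 : ℚ))}

open Finset Asymptotics

theorem exists_int_root_of_not_irreducible_map {p : ℤ[X]} (hp : p.Monic)
    (h2 : 2 ≤ p.natDegree) (h3 : p.natDegree ≤ 3)
    (h : ¬Irreducible (p.map (algebraMap ℤ ℚ))) : ∃ r : ℤ, p.IsRoot r := by
  have hq := hp.map (algebraMap ℤ ℚ)
  have hdeg : (p.map (algebraMap ℤ ℚ)).natDegree = p.natDegree :=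
    natDegree_map_eq_of_injective (RingHom.injective_int _) _
  rw [hq.irreducible_iff_roots_eq_zero_of_degree_le_three (hdeg ▸ h2) (hdeg ▸ h3)] at h
  obtain ⟨ρ, hρ⟩ := Multiset.exists_mem_of_ne_zero h
  rw [mem_roots hq.ne_zero, IsRoot, eval_map, ← aeval_def] at hρ
  obtain ⟨r, rfl, -⟩ := exists_integer_of_is_root_of_monic hp hρ
  rw [aeval_algebraMap_apply_eq_algebraMap_eval] at hρ
  exact ⟨r, (algebraMap ℤ ℚ).injective_int (by simpa using hρ)⟩

def cubic (p : ℤ × ℤ) : ℚ[X] := X ^ 3 + C (p.1 : ℚ) * X + C (p.2 : ℚ)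

theorem exists_int_root_of_not_irreducible_cubic {p : ℤ × ℤ} (h : ¬Irreducible (cubic p)) :
    ∃ r : ℤ, r ^ 3 + p.1 * r + p.2 = 0 := by
  have hmonic : (X ^ 3 + C p.1 * X + C p.2 : ℤ[X]).Monic := by monicity!
  have hdeg : (X ^ 3 + C p.1 * X + C p.2 : ℤ[X]).natDegree = 3 := by compute_degree!
  obtain ⟨r, hr⟩ := exists_int_root_of_not_irreducible_map hmonic (by omega) (by omega)
    (by simpa [cubic] using h)
  exact ⟨r, by simpa using hr⟩

/- If `r² ≥ -4a₁` then `a₀² = r²(r² + a₁)² ≥ (-4a₁)(-3a₁)² = -36a₁³`, against the discriminant. -/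
theorem sq_lt_of_cubic_root {R : Type*} [CommRing R] [LinearOrder R] [IsStrictOrderedRing R]
    {a₁ a₀ r : R} (hr : r ^ 3 + a₁ * r + a₀ = 0) (hdisc : 27 * a₀ ^ 2 < -4 * a₁ ^ 3) :
    r ^ 2 < -4 * a₁ := by
  by_contra! h
  have ha₁ : a₁ < 0 := by
    by_contra! ha₁
    nlinarith [pow_nonneg ha₁ 3, sq_nonneg a₀]
  have ha₀ : a₀ ^ 2 = r ^ 2 * (r ^ 2 + a₁) ^ 2 := by
    rw [show a₀ = -(r * (r ^ 2 + a₁)) by linear_combination hr]; ring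
  have hsq : (-3 * a₁) ^ 2 ≤ (r ^ 2 + a₁) ^ 2 := pow_le_pow_left₀ (by linarith) (by linarith) 2
  nlinarith [mul_le_mul h hsq (sq_nonneg _) (sq_nonneg r)]

theorem card_Ioo_zero_ceil {y : ℝ} (hy : 0 ≤ y) :
    y - 1 ≤ (#(Ioo 0 ⌈y⌉) : ℝ) ∧ (#(Ioo 0 ⌈y⌉) : ℝ) ≤ y := by
  have hcast : (#(Ioo 0 ⌈y⌉) : ℝ) = max ((⌈y⌉ : ℝ) - 1) 0 := by
    rw [Int.card_Ioo, sub_zero, ← Int.cast_natCast, Int.toNat_eq_max]; push_cast; rfl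
  rw [hcast]
  exact ⟨by linarith [Int.le_ceil y, le_max_left ((⌈y⌉ : ℝ) - 1) 0],
    max_le (by linarith [Int.ceil_lt_add_one y]) hy⟩

theorem sum_Icc_one_eq_sum_range {M : Type*} [AddCommMonoid M] (f : ℕ → M) (N : ℕ) :
    ∑ m ∈ Icc 1 N, f m = ∑ i ∈ range N, f (i + 1) := by
  rw [range_eq_Ico, sum_Ico_add' f 0 N 1, zero_add, Ico_add_one_right_eq_Icc]

/- Compare the sum with `∫ x ^ p` over `[0, ⌊y⌋₊]` from above and over `[0, ⌊y⌋₊ + 1]` from below. -/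
theorem sum_Icc_rpow_floor_bounds {p y : ℝ} (hp : 0 ≤ p) (hy : 0 ≤ y) :
    y ^ (p + 1) / (p + 1) - (y + 1) ^ p ≤ ∑ m ∈ Icc 1 ⌊y⌋₊, (m : ℝ) ^ p ∧
      ∑ m ∈ Icc 1 ⌊y⌋₊, (m : ℝ) ^ p ≤ y ^ (p + 1) / (p + 1) + y ^ p := by
  set N := ⌊y⌋₊
  have hmono : MonotoneOn (fun x : ℝ => x ^ p) (Set.Ici 0) := fun a ha b _ hab =>
    Real.rpow_le_rpow ha hab hp
  have hint (b : ℝ) (hb : 0 ≤ b) : ∫ x in (0 : ℝ)..b, x ^ p = b ^ (p + 1) / (p + 1) := by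
    rw [integral_rpow (Or.inl (by linarith)), Real.zero_rpow (by linarith), sub_zero]
  have hNy : (N : ℝ) ≤ y := Nat.floor_le hy
  have hyN : y ≤ N + 1 := (Nat.lt_floor_add_one y).le
  rw [sum_Icc_one_eq_sum_range]
  push_cast
  constructor
  · have h := (hmono.mono Set.Icc_subset_Ici_self).integral_le_sum (x₀ := 0) (a := N + 1)
    rw [zero_add, Nat.cast_add_one, hint _ (by positivity), sum_range_succ] at h
    push_cast at h
    simp only [zero_add] at h
    have h1 : y ^ (p + 1) ≤ ((N : ℝ) + 1) ^ (p + 1) := Real.rpow_le_rpow hy hyN (by linarith)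
    have h2 : ((N : ℝ) + 1) ^ p ≤ (y + 1) ^ p :=
      Real.rpow_le_rpow (by positivity) (by linarith) hp
    have h3 : y ^ (p + 1) / (p + 1) ≤ ((N : ℝ) + 1) ^ (p + 1) / (p + 1) :=
      div_le_div_of_nonneg_right h1 (by linarith)
    linarith
  · have h := (hmono.mono Set.Icc_subset_Ici_self).sum_le_integral (x₀ := 0) (a := N)
    rw [zero_add, hint _ (by positivity)] at h
    simp only [zero_add] at h
    have hsucc := sum_range_succ' (fun i : ℕ => (i : ℝ) ^ p) N
    rw [sum_range_succ] at hsucc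
    push_cast at hsucc
    have h1 : (N : ℝ) ^ (p + 1) ≤ y ^ (p + 1) :=
      Real.rpow_le_rpow (by positivity) hNy (by linarith)
    have h2 : (N : ℝ) ^ p ≤ y ^ p := Real.rpow_le_rpow (by positivity) hNy hp
    have h3 : (N : ℝ) ^ (p + 1) / (p + 1) ≤ y ^ (p + 1) / (p + 1) :=
      div_le_div_of_nonneg_right h1 (by linarith)
    linarith [Real.rpow_nonneg (le_refl (0 : ℝ)) p]

theorem isLittleO_rpow_rpow_atTop {a b : ℝ} (hab : a < b) :
    (fun x : ℝ => x ^ a) =o[atTop] fun x => x ^ b := by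
  refine (isLittleO_iff_tendsto' ?_).2 ?_
  · filter_upwards [eventually_gt_atTop 0] with x hx h
    exact absurd h (Real.rpow_pos_of_pos hx _).ne'
  · refine (tendsto_rpow_neg_atTop (sub_pos.2 hab)).congr' ?_
    filter_upwards [eventually_gt_atTop 0] with x hx
    rw [← Real.rpow_sub hx, neg_sub]

theorem rpow_three_halves {x : ℝ} (hx : 0 ≤ x) : x ^ (3 / 2 : ℝ) = x * √x := by
  rw [show (3 / 2 : ℝ) = 1 + 1 / 2 by norm_num, Real.rpow_add' hx (by norm_num), Real.rpow_one,
    Real.sqrt_eq_rpow]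

def posDiscPairs (x : ℝ) : Set (ℤ × ℤ) :=
  {p | -x / 2 ≤ (p.1 : ℝ) ∧ p.1 < 0 ∧ 0 < p.2 ∧ 27 * (p.2 : ℝ) ^ 2 < -4 * (p.1 : ℝ) ^ 3}

def discBound (m : ℕ) : ℝ := √(4 / 27) * (m : ℝ) ^ (3 / 2 : ℝ)

theorem lt_discBound_iff {m : ℕ} {a : ℤ} (ha : 0 ≤ a) :
    (a : ℝ) < discBound m ↔ 27 * (a : ℝ) ^ 2 < 4 * (m : ℝ) ^ 3 := by
  have hsq : discBound m ^ 2 = 4 / 27 * (m : ℝ) ^ 3 := by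
    rw [discBound, rpow_three_halves m.cast_nonneg, mul_pow, mul_pow, Real.sq_sqrt (by norm_num),
      Real.sq_sqrt m.cast_nonneg]
    ring
  rw [← pow_lt_pow_iff_left₀ (by exact_mod_cast ha) (by unfold discBound; positivity) two_ne_zero,
    hsq]
  constructor <;> intro h <;> linarith

theorem neg_mem_posDiscPairs_iff {x : ℝ} {m : ℕ} {a : ℤ} :
    (-(m : ℤ), a) ∈ posDiscPairs x ↔ m ∈ Icc 1 ⌊x / 2⌋₊ ∧ a ∈ Ioo 0 ⌈discBound m⌉ := by
  change -x / 2 ≤ ((-(m : ℤ) : ℤ) : ℝ) ∧ -(m : ℤ) < 0 ∧ 0 < a ∧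
    27 * (a : ℝ) ^ 2 < -4 * ((-(m : ℤ) : ℤ) : ℝ) ^ 3 ↔ _
  have hcube : -4 * (-(m : ℝ)) ^ 3 = 4 * (m : ℝ) ^ 3 := by ring
  push_cast
  rw [hcube, mem_Icc, mem_Ioo, Int.lt_ceil]
  constructor
  · rintro ⟨hx, hm, ha, hdisc⟩
    have hm0 : m ≠ 0 := by omega
    exact ⟨⟨by omega, (Nat.le_floor_iff' hm0).2 (by linarith)⟩, ha,
      (lt_discBound_iff ha.le).2 hdisc⟩
  · rintro ⟨⟨hm1, hmx⟩, ha, hdisc⟩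
    have hm0 : m ≠ 0 := by omega
    exact ⟨by linarith [(Nat.le_floor_iff' hm0).1 hmx], by omega, ha,
      (lt_discBound_iff ha.le).1 hdisc⟩

theorem posDiscPairs_eq (x : ℝ) : posDiscPairs x =
    ((Icc 1 ⌊x / 2⌋₊).sigma fun m => Ioo 0 ⌈discBound m⌉).image fun q => (-(q.1 : ℤ), q.2) := by
  ext ⟨a₁, a₀⟩
  rw [mem_coe, mem_image]
  constructor
  · intro h
    obtain ⟨m, rfl⟩ := Int.exists_eq_neg_ofNat h.2.1.le
    exact ⟨⟨m, a₀⟩, mem_sigma.2 (neg_mem_posDiscPairs_iff.1 h), rfl⟩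
  · rintro ⟨⟨m, a⟩, hq, he⟩
    rw [← he]
    exact neg_mem_posDiscPairs_iff.2 (mem_sigma.1 hq)

theorem irredCubicCount_add_ncard_reducible (x : ℝ) :
    irredCubicCount x + {p ∈ posDiscPairs x | ¬Irreducible (cubic p)}.ncard =
      (posDiscPairs x).ncard := by
  have hfin : (posDiscPairs x).Finite := by rw [posDiscPairs_eq]; exact finite_toSet _
  rw [← Set.ncard_inter_add_ncard_sdiff_eq_ncard _ {p | Irreducible (cubic p)} hfin]
  rw [← Nat.card_coe_set_eq, irredCubicCount]
  exact congrArg (· + _) (Nat.card_congr (Equiv.subtypeEquivRight fun _ =>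
    ⟨fun ⟨h₁, h₂, h₃, h₄, h⟩ => ⟨⟨h₁, h₂, h₃, h₄⟩, h⟩, fun ⟨⟨h₁, h₂, h₃, h₄⟩, h⟩ => ⟨h₁, h₂, h₃, h₄, h⟩⟩))

theorem ncard_posDiscPairs (x : ℝ) :
    (posDiscPairs x).ncard = ∑ m ∈ Icc 1 ⌊x / 2⌋₊, #(Ioo 0 ⌈discBound m⌉) := by
  rw [posDiscPairs_eq, Set.ncard_coe_finset, card_image_of_injective, card_sigma]
  rintro ⟨m, a⟩ ⟨m', a'⟩ h
  simp only [Prod.mk.injEq, neg_inj, Nat.cast_inj] at h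
  obtain ⟨rfl, rfl⟩ := h
  rfl

theorem reducible_subset_image (x : ℝ) :
    {p ∈ posDiscPairs x | ¬Irreducible (cubic p)} ⊆
      ((Icc 1 ⌊x / 2⌋₊ ×ˢ Icc (-⌊√(2 * x)⌋) ⌊√(2 * x)⌋).image
        fun q : ℕ × ℤ => (-(q.1 : ℤ), q.1 * q.2 - q.2 ^ 3)) := by
  rintro ⟨a₁, a₀⟩ ⟨hp, hred⟩
  obtain ⟨m, rfl⟩ := Int.exists_eq_neg_ofNat hp.2.1.le
  obtain ⟨r, hr⟩ := exists_int_root_of_not_irreducible_cubic hred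
  have hm := (neg_mem_posDiscPairs_iff.1 hp).1
  have hr2 : (r : ℝ) ^ 2 < -4 * ((-(m : ℤ) : ℤ) : ℝ) :=
    sq_lt_of_cubic_root (by exact_mod_cast hr) hp.2.2.2
  have hmx : (m : ℝ) ≤ x / 2 :=
    (Nat.le_floor_iff' (by rw [mem_Icc] at hm; omega)).1 (mem_Icc.1 hm).2
  have hrx : |(r : ℝ)| ≤ √(2 * x) := by
    rw [← Real.sqrt_sq_eq_abs]
    push_cast at hr2
    exact Real.sqrt_le_sqrt (by linarith)
  refine mem_image.2 ⟨(m, r), mem_product.2 ⟨hm, mem_Icc.2 ⟨?_, ?_⟩⟩, ?_⟩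
  · rw [neg_le, Int.le_floor]; push_cast; linarith [neg_abs_le (r : ℝ)]
  · rw [Int.le_floor]; linarith [le_abs_self (r : ℝ)]
  · simp only [Prod.mk.injEq, true_and]; linarith

theorem ncard_reducible_le (x : ℝ) :
    ({p ∈ posDiscPairs x | ¬Irreducible (cubic p)}.ncard : ℝ) ≤
      ⌊x / 2⌋₊ * (2 * √(2 * x) + 1) := by
  set K := ⌊√(2 * x)⌋
  have hK : ((#(Icc (-K) K) : ℕ) : ℝ) ≤ 2 * √(2 * x) + 1 := by
    have hK0 : 0 ≤ K := Int.floor_nonneg.2 (Real.sqrt_nonneg _)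
    rw [Int.card_Icc, ← Int.cast_natCast, Int.toNat_of_nonneg (by omega)]
    push_cast
    linarith [Int.floor_le √(2 * x)]
  calc ({p ∈ posDiscPairs x | ¬Irreducible (cubic p)}.ncard : ℝ)
      ≤ #(Icc 1 ⌊x / 2⌋₊ ×ˢ Icc (-K) K) := by
        exact_mod_cast (Set.ncard_le_ncard (reducible_subset_image x) (finite_toSet _)).trans
          ((Set.ncard_coe_finset _).trans_le card_image_le)
    _ ≤ ⌊x / 2⌋₊ * (2 * √(2 * x) + 1) := by
        rw [card_product, Nat.card_Icc, Nat.add_sub_cancel, Nat.cast_mul]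
        exact mul_le_mul_of_nonneg_left hK (Nat.cast_nonneg _)

theorem sqrt_four_div_27_mul_rpow_div {x : ℝ} (hx : 0 ≤ x) :
    √(4 / 27) * ((x / 2) ^ (3 / 2 + 1 : ℝ) / (3 / 2 + 1)) = 1 / (15 * √6) * x ^ (5 / 2 : ℝ) := by
  have h2 : (2 : ℝ) ^ (3 / 2 + 1 : ℝ) = 4 * √2 := by
    rw [show (3 / 2 + 1 : ℝ) = 2 + 1 / 2 by norm_num, Real.rpow_add (by norm_num), Real.rpow_two,
      ← Real.sqrt_eq_rpow]
    norm_num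
  have h27 : √(4 / 27 : ℝ) = 2 / (3 * √3) := by
    rw [Real.sqrt_div' _ (by norm_num), show (4 : ℝ) = 2 ^ 2 by norm_num,
      show (27 : ℝ) = 3 ^ 2 * 3 by norm_num, Real.sqrt_sq (by norm_num),
      Real.sqrt_mul (by norm_num), Real.sqrt_sq (by norm_num)]
  have h6 : √(6 : ℝ) = √2 * √3 := by rw [← Real.sqrt_mul (by norm_num)]; norm_num
  rw [Real.div_rpow hx (by norm_num), h2, h27, h6, show (3 / 2 + 1 : ℝ) = 5 / 2 by norm_num]
  field_simp
  ring

theorem ncard_posDiscPairs_bounds (x : ℝ) :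
    √(4 / 27) * ∑ m ∈ Icc 1 ⌊x / 2⌋₊, (m : ℝ) ^ (3 / 2 : ℝ) - ⌊x / 2⌋₊ ≤ (posDiscPairs x).ncard ∧
      ((posDiscPairs x).ncard : ℝ) ≤ √(4 / 27) * ∑ m ∈ Icc 1 ⌊x / 2⌋₊, (m : ℝ) ^ (3 / 2 : ℝ) := by
  have hfib (m : ℕ) := card_Ioo_zero_ceil (y := discBound m) (by unfold discBound; positivity)
  rw [ncard_posDiscPairs, mul_sum]
  push_cast
  constructor
  · have h := sum_le_sum fun m (_ : m ∈ Icc 1 ⌊x / 2⌋₊) => (hfib m).1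
    rw [sum_sub_distrib, sum_const, Nat.card_Icc, Nat.add_sub_cancel, nsmul_one] at h
    exact h
  · exact sum_le_sum fun m _ => (hfib m).2

theorem abs_ncard_posDiscPairs_sub_le {x : ℝ} (hx : 2 ≤ x) :
    |((posDiscPairs x).ncard : ℝ) - 1 / (15 * √6) * x ^ (5 / 2 : ℝ)| ≤ 2 * x ^ (3 / 2 : ℝ) := by
  obtain ⟨hlow, hup⟩ := ncard_posDiscPairs_bounds x
  obtain ⟨hS₁, hS₂⟩ :=
    sum_Icc_rpow_floor_bounds (p := 3 / 2) (y := x / 2) (by norm_num) (by linarith)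
  have hk₀ : 0 ≤ √(4 / 27 : ℝ) := Real.sqrt_nonneg _
  have hk₁ : √(4 / 27 : ℝ) ≤ 1 := Real.sqrt_le_one.2 (by norm_num)
  have hN : (⌊x / 2⌋₊ : ℝ) ≤ x ^ (3 / 2 : ℝ) :=
    calc (⌊x / 2⌋₊ : ℝ) ≤ x := (Nat.floor_le (by linarith)).trans (by linarith)
      _ ≤ x ^ (3 / 2 : ℝ) := Real.self_le_rpow_of_one_le (by linarith) (by norm_num)
  have he₁ : (x / 2 + 1) ^ (3 / 2 : ℝ) ≤ x ^ (3 / 2 : ℝ) :=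
    Real.rpow_le_rpow (by linarith) (by linarith) (by norm_num)
  have he₂ : (x / 2) ^ (3 / 2 : ℝ) ≤ x ^ (3 / 2 : ℝ) :=
    Real.rpow_le_rpow (by linarith) (by linarith) (by norm_num)
  rw [← sqrt_four_div_27_mul_rpow_div (by linarith), abs_sub_le_iff]
  constructor <;> nlinarith

theorem ncard_reducible_le_rpow {x : ℝ} (hx : 1 ≤ x) :
    ({p ∈ posDiscPairs x | ¬Irreducible (cubic p)}.ncard : ℝ) ≤ 2 * x ^ (3 / 2 : ℝ) := by
  have hN : (⌊x / 2⌋₊ : ℝ) ≤ x / 2 := Nat.floor_le (by linarith)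
  have hsx : 1 ≤ √x := Real.one_le_sqrt.2 hx
  have hs2 : √2 ≤ 3 / 2 := Real.sqrt_le_iff.2 ⟨by norm_num, by norm_num⟩
  rw [rpow_three_halves (by linarith)]
  refine (ncard_reducible_le x).trans ?_
  rw [Real.sqrt_mul (by norm_num)]
  calc (⌊x / 2⌋₊ : ℝ) * (2 * (√2 * √x) + 1) ≤ x / 2 * (2 * (√2 * √x) + 1) :=
        mul_le_mul_of_nonneg_right hN (by positivity)
    _ ≤ 2 * (x * √x) := by nlinarith [mul_le_mul_of_nonneg_left hs2 (by positivity : 0 ≤ x * √x)]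

theorem abs_irredCubicCount_sub_le {x : ℝ} (hx : 2 ≤ x) :
    |(irredCubicCount x : ℝ) - 1 / (15 * √6) * x ^ (5 / 2 : ℝ)| ≤ 4 * x ^ (3 / 2 : ℝ) := by
  have hsplit : (irredCubicCount x : ℝ) = (posDiscPairs x).ncard -
      {p ∈ posDiscPairs x | ¬Irreducible (cubic p)}.ncard := by
    rw [← irredCubicCount_add_ncard_reducible x]; push_cast; ring
  have hR := ncard_reducible_le_rpow (x := x) (by linarith)
  have htot := abs_ncard_posDiscPairs_sub_le hx
  rw [hsplit]
  calc _ = |((posDiscPairs x).ncard - 1 / (15 * √6) * x ^ (5 / 2 : ℝ)) -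
          ({p ∈ posDiscPairs x | ¬Irreducible (cubic p)}.ncard : ℝ)| := by congr 1; ring
    _ ≤ _ := (abs_sub _ _).trans (by rw [Nat.abs_cast]; linarith)

/-- The above count equals `(1/(15√6))·X^{5/2} + o(X^{5/2})` as `X → ∞`. -/
theorem statement8 :
    (fun X : ℝ => (irredCubicCount X : ℝ) - (1 / (15 * Real.sqrt 6)) * X ^ (5 / 2 : ℝ))
      =o[atTop] fun X : ℝ => X ^ (5 / 2 : ℝ) := by
  have hbound : (fun X : ℝ => (irredCubicCount X : ℝ) - 1 / (15 * √6) * X ^ (5 / 2 : ℝ))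
      =O[atTop] fun X : ℝ => X ^ (3 / 2 : ℝ) := by
    refine IsBigO.of_bound 4 ?_
    filter_upwards [eventually_ge_atTop 2] with X hX
    rw [Real.norm_eq_abs, Real.norm_of_nonneg (by positivity)]
    exact abs_irredCubicCount_sub_le hX
  exact hbound.trans_isLittleO (isLittleO_rpow_rpow_atTop (by norm_num))
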